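/- Let U ⊆ ℍ^m ≅ ℝ^{4m} be open, u = (u^1, …, u^Q) : U → ℝ^Q a C² map, and let I, J, K be C¹ maps from ℝ^Q to the space of Q×Q real matrices, with entries I_α^β, J_α^β, K_α^β (so that (I(y)w)^β = Σ_α I_α^β(y) w^α). Suppose that at every x ∈ U the differential satisfies du_x = I(u(x))∘du_x∘i + J(u(x))∘du_x∘j + K(u(x))∘du_x∘k, where i, j, k act on ℍ^m by componentwise left quaternion multiplication. Let (e_1, …, e_{4m}) be the standard orthonormal basis of ℝ^{4m} and set c^i_{ℓs} := ⟨i(e_ℓ), e_s⟩, c^j_{ℓs} := ⟨j(e_ℓ), e_s⟩, c^k_{ℓs} := ⟨k(e_ℓ), e_s⟩ (these are antisymmetric in (ℓ, s)). Then for every β and every x ∈ U: Σ_{ℓ=1}^{4m} ∂²u^β/∂x_ℓ²(x) = Σ_{ℓ,s=1}^{4m} Σ_{α=1}^{Q} [ c^i_{ℓs} ∂_ℓ(I_α^β∘u)(x) ∂_s u^α(x) + c^j_{ℓs} ∂_ℓ(J_α^β∘u)(x) ∂_s u^α(x) + c^k_{ℓs} ∂_ℓ(K_α^β∘u)(x)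 ∂_s u^α(x) ]. (Flat-domain form of the Jacobian structure of the triholomorphic map equation, Proposition 3.1.) -/

import Mathlib

open scoped Quaternion RealInnerProductSpace

/-- The quaternion units `1, i, j, k` as a function on `Fin 4`. -/
noncomputable def quatUnit : Fin 4 → ℍ[ℝ] :=
  ![1, ⟨0, 1, 0, 0⟩, ⟨0, 0, 1, 0⟩, ⟨0, 0, 0, 1⟩]

/-- The quaternion unit `i`. -/
noncomputable def Quat.i : ℍ[ℝ] := ⟨0, 1, 0, 0⟩
/-- The quaternion unit `j`. -/
noncomputable def Quat.j : ℍ[ℝ] := ⟨0, 0, 1, 0⟩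
/-- The quaternion unit `k`. -/
noncomputable def Quat.k : ℍ[ℝ] := ⟨0, 0, 0, 1⟩

/-- The standard orthonormal basis of `ℍ^m ≅ ℝ^{4m}`, indexed by `Fin m × Fin 4`. -/
noncomputable def stdBasisQ (m : ℕ) (p : Fin m × Fin 4) : Fin m → ℍ[ℝ] :=
  Pi.single p.1 (quatUnit p.2)

/-- The coefficient `⟨q·e_ℓ, e_s⟩` of left multiplication by a fixed quaternion `q`
in the standard orthonormal basis of `ℍ^m ≅ ℝ^{4m}`. -/
noncomputable def multCoeff (m : ℕ) (q : ℍ[ℝ]) (l s : Fin m × Fin 4) : ℝ :=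
  ∑ n : Fin m, ⟪q * stdBasisQ m l n, stdBasisQ m s n⟫

/-!
Differentiate the equation in the direction `e_ℓ` and sum over `ℓ`. By the product rule each of
the three terms splits in two. The terms containing second derivatives of `u` are traces
`∑_ℓ D²u(e_ℓ, q e_ℓ)` of the symmetric Hessian against left multiplication by a pure quaternion
`q ∈ {i, j, k}`, whose matrix `c^q_{ℓs}` is antisymmetric, so they vanish. In the remaining terms,
expanding `q e_ℓ = ∑_s c^q_{ℓs} e_s` gives the Jacobian expressions.
-/

open Finset

lemma quaternion_eq_sum_inner_smul_quatUnit (p : ℍ[ℝ]) :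
    p = ∑ b : Fin 4, ⟪p, quatUnit b⟫ • quatUnit b := by
  ext <;> simp [Fin.sum_univ_four, quatUnit, Quaternion.inner_def]
  -- `quatUnit` is built from `QuaternionAlgebra.mk`, so the `Quaternion` lemmas match only up to
  -- unfolding `ℍ[ℝ]`.
  · erw [Quaternion.re_smul, Quaternion.re_smul, Quaternion.re_smul]; simp
  · erw [Quaternion.imI_smul, Quaternion.imI_smul, Quaternion.imI_smul]; simp
  · erw [Quaternion.imJ_smul, Quaternion.imJ_smul, Quaternion.imJ_smul]; simp
  · erw [Quaternion.imK_smul, Quaternion.imK_smul, Quaternion.imK_smul]; simp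

lemma inner_mul_left_eq_neg_inner_mul_left {q : ℍ[ℝ]} (hq : q.re = 0) (a b : ℍ[ℝ]) :
    ⟪q * a, b⟫ = -⟪q * b, a⟫ := by
  simp [Quaternion.inner_def, hq]
  ring

lemma multCoeff_comm_neg (m : ℕ) {q : ℍ[ℝ]} (hq : q.re = 0) (l s : Fin m × Fin 4) :
    multCoeff m q l s = -multCoeff m q s l := by
  rw [multCoeff, multCoeff, ← sum_neg_distrib]
  exact sum_congr rfl fun n _ => inner_mul_left_eq_neg_inner_mul_left hq _ _

lemma multCoeff_mk_eq_inner (m : ℕ) (q : ℍ[ℝ]) (l : Fin m × Fin 4) (n : Fin m) (b : Fin 4) :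
    multCoeff m q l (n, b) = ⟪q * stdBasisQ m l n, quatUnit b⟫ := by
  rw [multCoeff, sum_eq_single n (fun n' _ hn' => by simp [stdBasisQ, Pi.single_eq_of_ne hn'])
    (by simp)]
  simp [stdBasisQ]

lemma mul_stdBasisQ_eq_sum (m : ℕ) (q : ℍ[ℝ]) (l : Fin m × Fin 4) :
    (fun n => q * stdBasisQ m l n) = ∑ s, multCoeff m q l s • stdBasisQ m s := by
  funext n
  rw [Finset.sum_apply, Fintype.sum_prod_type, sum_eq_single n
    (fun n' _ hn' => by simp [stdBasisQ, Pi.single_eq_of_ne' hn']) (by simp)]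
  simpa [multCoeff_mk_eq_inner, stdBasisQ] using quaternion_eq_sum_inner_smul_quatUnit _

lemma sum_sum_smul_eq_zero_of_antisymm {ι G : Type*} [Fintype ι] [AddCommGroup G] [Module ℝ G]
    {c : ι → ι → ℝ} (hc : ∀ l s, c l s = -c s l) {S : ι → ι → G} (hS : ∀ l s, S l s = S s l) :
    ∑ l, ∑ s, c l s • S l s = 0 := by
  set T := ∑ l, ∑ s, c l s • S l s
  have hT : T = -T := calc
    T = ∑ l, ∑ s, c s l • S s l := sum_comm
    _ = -T := by
      rw [← sum_neg_distrib]
      refine sum_congr rfl fun l _ => ?_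
      rw [← sum_neg_distrib]
      exact sum_congr rfl fun s _ => by rw [hc, hS, neg_smul]
  have h2T : (2 : ℝ) • T = 0 := by
    rw [two_smul]
    nth_rewrite 2 [hT]
    exact add_neg_cancel T
  exact (smul_eq_zero.mp h2T).resolve_left two_ne_zero

section

variable {m : ℕ} {G : Type*} [NormedAddCommGroup G] [NormedSpace ℝ G]

lemma sum_apply_stdBasisQ_mul_eq_zero (B : (Fin m → ℍ[ℝ]) →L[ℝ] (Fin m → ℍ[ℝ]) →L[ℝ] G)
    (hB : ∀ v w, B v w = B w v) {q : ℍ[ℝ]} (hq : q.re = 0) :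
    ∑ l, B (stdBasisQ m l) (fun n => q * stdBasisQ m l n) = 0 := by
  simp only [mul_stdBasisQ_eq_sum, map_sum, map_smul]
  exact sum_sum_smul_eq_zero_of_antisymm (multCoeff_comm_neg m hq) fun l s => hB _ _

lemma sum_sum_mul_apply_stdBasisQ_mul_eq_zero {ι : Type*} [Fintype ι]
    (B : (Fin m → ℍ[ℝ]) →L[ℝ] (Fin m → ℍ[ℝ]) →L[ℝ] (ι → ℝ)) (hB : ∀ v w, B v w = B w v)
    {q : ℍ[ℝ]} (hq : q.re = 0) (a : ι → ℝ) :
    ∑ l, ∑ α, a α * B (stdBasisQ m l) (fun n => q * stdBasisQ m l n) α = 0 := by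
  have h α := congrFun (sum_apply_stdBasisQ_mul_eq_zero B hB hq) α
  simp only [Finset.sum_apply, Pi.zero_apply] at h
  rw [sum_comm]
  simp only [← mul_sum, h, mul_zero, sum_const_zero]

lemma sum_sum_apply_mul_stdBasisQ_mul {ι : Type*} [Fintype ι]
    (f : (Fin m → ℍ[ℝ]) →L[ℝ] (ι → ℝ)) (q : ℍ[ℝ]) (a' : ι → (Fin m → ℍ[ℝ]) →L[ℝ] ℝ) :
    ∑ l, ∑ α, f (fun n => q * stdBasisQ m l n) α * a' α (stdBasisQ m l)
      = ∑ l, ∑ s, ∑ α, multCoeff m q l s * a' α (stdBasisQ m l) * f (stdBasisQ m s) α := by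
  simp only [mul_stdBasisQ_eq_sum, map_sum, map_smul, Finset.sum_apply, Pi.smul_apply,
    smul_eq_mul, sum_mul]
  refine sum_congr rfl fun l _ => ?_
  rw [sum_comm]
  exact sum_congr rfl fun s _ => sum_congr rfl fun α _ => by ring

end

lemma hasFDerivAt_sum_mul_fderiv_apply {E ι : Type*} [NormedAddCommGroup E] [NormedSpace ℝ E]
    [Fintype ι] {u : E → ι → ℝ} {a : ι → E → ℝ} {x : E}
    (ha : ∀ α, DifferentiableAt ℝ (a α) x) (hu : DifferentiableAt ℝ (fderiv ℝ u) x) (v : E) :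
    HasFDerivAt (fun z => ∑ α, a α z * fderiv ℝ u z v α)
      (∑ α, (a α x • (ContinuousLinearMap.proj α ∘L (fderiv ℝ (fderiv ℝ u) x).flip v)
        + fderiv ℝ u x v α • fderiv ℝ (a α) x)) x := by
  have hDu : HasFDerivAt (fun z => fderiv ℝ u z v) ((fderiv ℝ (fderiv ℝ u) x).flip v) x := by
    simpa using hu.hasFDerivAt.clm_apply (hasFDerivAt_const v x)
  exact HasFDerivAt.fun_sum fun α _ =>
    (ha α).hasFDerivAt.mul (((hasFDerivAt_apply α (fderiv ℝ u x v)).comp x hDu :))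

/-- flat-domain Jacobian structure of the triholomorphic map equation:
for a `C²` solution `u : U ⊆ ℍ^m → ℝ^Q` of the triholomorphic equation with `C¹` coefficient
matrices `I, J, K`, the Laplacian of each component `u^β` equals the sum of Jacobian-type
expressions `Σ c_{ℓs} ∂_ℓ(I_α^β ∘ u) ∂_s u^α` (and the analogous `J`- and `K`-terms). -/
theorem stmt7 {m Q : ℕ}
    (U : Set (Fin m → ℍ[ℝ])) (hU : IsOpen U)
    (u : (Fin m → ℍ[ℝ]) → (Fin Q → ℝ))
    (hu : ContDiffOn ℝ 2 u U)
    (I J K : (Fin Q → ℝ) → Fin Q → Fin Q → ℝ)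
    (hI : ContDiff ℝ 1 I) (hJ : ContDiff ℝ 1 J) (hK : ContDiff ℝ 1 K)
    (htri : ∀ x ∈ U, ∀ y : Fin m → ℍ[ℝ], ∀ β : Fin Q,
      fderiv ℝ u x y β
        = (∑ α : Fin Q, I (u x) β α * fderiv ℝ u x (fun n => Quat.i * y n) α)
          + (∑ α : Fin Q, J (u x) β α * fderiv ℝ u x (fun n => Quat.j * y n) α)
          + (∑ α : Fin Q, K (u x) β α * fderiv ℝ u x (fun n => Quat.k * y n) α)) :
    ∀ x ∈ U, ∀ β : Fin Q,
      (∑ l : Fin m × Fin 4,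
          fderiv ℝ (fun z => fderiv ℝ u z (stdBasisQ m l) β) x (stdBasisQ m l))
        = ∑ l : Fin m × Fin 4, ∑ s : Fin m × Fin 4, ∑ α : Fin Q,
            (multCoeff m Quat.i l s
                * fderiv ℝ (fun z => I (u z) β α) x (stdBasisQ m l)
                * fderiv ℝ u x (stdBasisQ m s) α
              + multCoeff m Quat.j l s
                * fderiv ℝ (fun z => J (u z) β α) x (stdBasisQ m l)
                * fderiv ℝ u x (stdBasisQ m s) α
              + multCoeff m Quat.k l s
                * fderiv ℝ (fun z => K (u z) β α) x (stdBasisQ m l)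
                * fderiv ℝ u x (stdBasisQ m s) α) := by
  intro x hx β
  have hu2 : ContDiffAt ℝ 2 u x := hu.contDiffAt (hU.mem_nhds hx)
  have hDu : DifferentiableAt ℝ (fderiv ℝ u) x :=
    (hu2.fderiv_right (m := 1) le_rfl).differentiableAt one_ne_zero
  have hsymm : IsSymmSndFDerivAt ℝ u x := hu2.isSymmSndFDerivAt (by simp)
  have hcoeff (M : (Fin Q → ℝ) → Fin Q → Fin Q → ℝ) (hM : ContDiff ℝ 1 M) (α : Fin Q) :
      DifferentiableAt ℝ (fun z => M (u z) β α) x :=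
    ((contDiff_pi.mp (contDiff_pi.mp hM β) α).differentiable one_ne_zero (u x)).comp x
      (hu2.differentiableAt two_ne_zero)
  have hderiv (l : Fin m × Fin 4) :=
    (((hasFDerivAt_sum_mul_fderiv_apply (hcoeff I hI) hDu (fun n => Quat.i * stdBasisQ m l n)).add
      (hasFDerivAt_sum_mul_fderiv_apply (hcoeff J hJ) hDu (fun n => Quat.j * stdBasisQ m l n))).add
      (hasFDerivAt_sum_mul_fderiv_apply (hcoeff K hK) hDu (fun n => Quat.k * stdBasisQ m l n))
      |>.congr_of_eventuallyEq (Filter.eventually_of_mem (hU.mem_nhds hx)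
        fun z hz => htri z hz (stdBasisQ m l) β)).fderiv
  simp only [hderiv, add_apply, _root_.sum_apply, smul_apply, ContinuousLinearMap.comp_apply,
    ContinuousLinearMap.flip_apply, ContinuousLinearMap.proj_apply, smul_eq_mul, sum_add_distrib,
    sum_sum_apply_mul_stdBasisQ_mul]
  rw [sum_sum_mul_apply_stdBasisQ_mul_eq_zero _ hsymm (q := Quat.i) rfl,
    sum_sum_mul_apply_stdBasisQ_mul_eq_zero _ hsymm (q := Quat.j) rfl,
    sum_sum_mul_apply_stdBasisQ_mul_eq_zero _ hsymm (q := Quat.k) rfl]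
  simp only [zero_add]
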